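/- arXiv:1607.01535 — 2 statements merged into one kernel-verified Lean document; each statement's English description precedes it below -/
import Mathlib

section
/- (Hilbert's inequality) For all square-summable sequences (a_j) and (b_j) of complex numbers indexed by positive integers, |∑_{j≠k} a_j · conj(b_k)/(j-k)|² ≤ π² (∑_j |a_j|²)(∑_j |b_j|²). -/
open Real MeasureTheory intervalIntegral Complex

noncomputable def ee (m : ℤ) (x : ℝ) : ℂ := Complex.exp (2 * π * Complex.I * m * x)

lemma ee_cont (m : ℤ) : Continuous (ee m) := by
  unfold ee; fun_prop

lemma exp_c_eq_one (m : ℤ) : Complex.exp (2 * π * Complex.I * m) = 1 := by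
  rw [show (2 * (π:ℂ) * Complex.I * m) = m * (2 * π * Complex.I) by ring]
  exact Complex.exp_int_mul_two_pi_mul_I m

lemma c_ne_zero {m : ℤ} (hm : m ≠ 0) : (2 * (π:ℂ) * Complex.I * m) ≠ 0 := by
  simp [Real.pi_ne_zero, Complex.I_ne_zero, hm]

lemma orth (m : ℤ) : ∫ x in (0:ℝ)..1, ee m x = if m = 0 then 1 else 0 := by
  unfold ee
  split_ifs with h
  · simp [h]
  · have hc := c_ne_zero h
    have : ∀ x : ℝ, Complex.exp (2 * π * Complex.I * m * x) =
        Complex.exp ((2 * π * Complex.I * m) * x) := fun x => rfl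
    rw [integral_exp_mul_complex hc]
    simp [exp_c_eq_one m]

lemma key1 {c : ℂ} (hc : c ≠ 0) :
    ∫ x in (0:ℝ)..1, (x:ℂ) * Complex.exp (c * x)
      = Complex.exp c / c - (Complex.exp c - 1) / c ^ 2 := by
  have hd : ∀ x ∈ Set.uIcc (0:ℝ) 1,
      HasDerivAt (fun x : ℝ => ((x:ℂ) - 1/c) * Complex.exp (c * x) / c)
        ((x:ℂ) * Complex.exp (c * x)) x := by
    intro x _
    have h1 : HasDerivAt (fun x : ℝ => ((x:ℂ) - 1/c)) 1 x := by
      simpa using (Complex.ofRealCLM.hasDerivAt (x := x)).sub_const (1/c)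
    have h2 : HasDerivAt (fun x : ℝ => Complex.exp (c * x)) (c * Complex.exp (c * x)) x := by
      have := ((Complex.hasDerivAt_exp (c * x)).comp x
        ((Complex.ofRealCLM.hasDerivAt (x := x)).const_mul c))
      simpa [mul_comm, Function.comp_def] using this
    have := (h1.mul h2).div_const c
    refine this.congr_deriv ?_
    field_simp
    ring
  have hint : IntervalIntegrable (fun x : ℝ => (x:ℂ) * Complex.exp (c * x)) volume 0 1 :=
    Continuous.intervalIntegrable (by fun_prop) 0 1
  have := intervalIntegral.integral_eq_sub_of_hasDerivAt hd hint
  rw [this]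
  push_cast
  field_simp
  rw [mul_zero, Complex.exp_zero]; ring

lemma intK (m : ℤ) :
    ∫ x in (0:ℝ)..1, (Complex.I * π * (2 * x - 1)) * ee m x
      = if m = 0 then 0 else 1 / (m : ℂ) := by
  unfold ee
  split_ifs with h
  · subst h
    simp only [Int.cast_zero, mul_zero, zero_mul, Complex.exp_zero, mul_one]
    have : ∀ x : ℝ, (Complex.I * π * (2 * x - 1)) =
        Complex.I * π * (2 * (x:ℂ)) - Complex.I * π := by intro x; ring
    simp_rw [this]
    rw [intervalIntegral.integral_sub ((by fun_prop : Continuous fun x : ℝ =>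
        Complex.I * (π:ℂ) * (2 * (x:ℂ))).intervalIntegrable 0 1) ((by fun_prop : Continuous fun _ : ℝ =>
        Complex.I * (π:ℂ)).intervalIntegrable 0 1)]
    simp_rw [show ∀ x : ℝ, Complex.I * (π:ℂ) * (2 * (x:ℂ)) = (Complex.I * π * 2) * (x:ℂ) from
      fun x => by ring]
    rw [intervalIntegral.integral_const_mul, intervalIntegral.integral_ofReal]
    simp
  · set c : ℂ := 2 * π * Complex.I * m with hcdef
    have hc := c_ne_zero h
    have split : ∀ x : ℝ, (Complex.I * π * (2 * x - 1)) * Complex.exp (2 * π * Complex.I * m * x)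
        = (Complex.I * π * 2) * ((x:ℂ) * Complex.exp (c * x))
          - (Complex.I * π) * Complex.exp (c * x) := by
      intro x; rw [hcdef]; ring
    simp_rw [hcdef, split]
    rw [intervalIntegral.integral_sub ((by fun_prop : Continuous fun x : ℝ =>
        Complex.I * (π:ℂ) * 2 * ((x:ℂ) * Complex.exp (c * x))).intervalIntegrable 0 1)
        ((by fun_prop : Continuous fun x : ℝ =>
        Complex.I * (π:ℂ) * Complex.exp (c * x)).intervalIntegrable 0 1),
      intervalIntegral.integral_const_mul, intervalIntegral.integral_const_mul,
      key1 hc, integral_exp_mul_complex hc]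
    have he : Complex.exp c = 1 := exp_c_eq_one m
    rw [he]
    push_cast
    rw [show (2 * (π:ℂ) * Complex.I * m * 1) = 2 * (π:ℂ) * Complex.I * m by ring,
      show (2 * (π:ℂ) * Complex.I * m * 0) = 0 by ring, he, Complex.exp_zero]
    have hπ : (π:ℂ) ≠ 0 := by exact_mod_cast Real.pi_ne_zero
    have hm : (m:ℂ) ≠ 0 := by exact_mod_cast h
    field_simp
    ring

lemma ee_mul_conj (m n : ℤ) (x : ℝ) :
    ee m x * (starRingEnd ℂ) (ee n x) = ee (m - n) x := by
  unfold ee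
  rw [← Complex.exp_conj, ← Complex.exp_add]
  congr 1
  simp only [map_mul, Complex.conj_I, Complex.conj_ofReal, map_ofNat, map_intCast]
  push_cast
  ring

noncomputable def fsum (a : ℕ+ → ℂ) (s : Finset ℕ+) (x : ℝ) : ℂ :=
  ∑ j ∈ s, a j * ee (j : ℤ) x

lemma fsum_cont (a : ℕ+ → ℂ) (s : Finset ℕ+) : Continuous (fsum a s) := by
  unfold fsum
  exact continuous_finset_sum _ fun j _ => continuous_const.mul (ee_cont _)

lemma fsum_mul_conj (a b : ℕ+ → ℂ) (s : Finset ℕ+) (x : ℝ) :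
    fsum a s x * (starRingEnd ℂ) (fsum b s x)
      = ∑ p ∈ s ×ˢ s, (a p.1 * (starRingEnd ℂ) (b p.2)) * ee ((p.1 : ℤ) - p.2) x := by
  unfold fsum
  rw [map_sum, Finset.sum_mul_sum, Finset.sum_product]
  refine Finset.sum_congr rfl fun j _ => Finset.sum_congr rfl fun k _ => ?_
  rw [map_mul, ← ee_mul_conj (j : ℤ) (k : ℤ) x]
  ring

lemma identB (a : ℕ+ → ℂ) (s : Finset ℕ+) :
    ∫ x in (0:ℝ)..1, ‖fsum a s x‖ ^ 2 = ∑ j ∈ s, ‖a j‖ ^ 2 := by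
  have hC : ∫ x in (0:ℝ)..1, fsum a s x * (starRingEnd ℂ) (fsum a s x)
      = ((∑ j ∈ s, ‖a j‖ ^ 2 : ℝ) : ℂ) := by
    simp_rw [fsum_mul_conj]
    rw [intervalIntegral.integral_finset_sum (fun p _ =>
      (Continuous.intervalIntegrable (by exact (continuous_const.mul (ee_cont _))) 0 1))]
    simp_rw [intervalIntegral.integral_const_mul, orth]
    rw [Finset.sum_product]
    push_cast
    refine Finset.sum_congr rfl fun j hj => ?_
    rw [Finset.sum_eq_single j]
    · simp [Complex.mul_conj']
    · intro k _ hk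
      have : (j : ℤ) - (k : ℤ) ≠ 0 := by
        simp only [sub_ne_zero]
        exact_mod_cast fun h => hk (PNat.coe_injective (by exact_mod_cast h)).symm
      simp [this]
    · intro hj'; exact absurd hj hj'
  have : ∀ x : ℝ, fsum a s x * (starRingEnd ℂ) (fsum a s x) = ((‖fsum a s x‖ ^ 2 : ℝ) : ℂ) := by
    intro x; rw [Complex.mul_conj']; push_cast; ring
  simp_rw [this] at hC
  rw [intervalIntegral.integral_ofReal] at hC
  exact_mod_cast hC

lemma identA (a b : ℕ+ → ℂ) (s : Finset ℕ+) :
    ∑ p ∈ s ×ˢ s, (if p.1 = p.2 then 0 else a p.1 * (starRingEnd ℂ) (b p.2)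
        / ((p.1 : ℂ) - (p.2 : ℂ)))
      = ∫ x in (0:ℝ)..1,
          (Complex.I * π * (2 * x - 1)) * (fsum a s x * (starRingEnd ℂ) (fsum b s x)) := by
  simp_rw [fsum_mul_conj, Finset.mul_sum]
  rw [intervalIntegral.integral_finset_sum (fun p _ =>
    (Continuous.intervalIntegrable (by exact ((continuous_const.mul ((continuous_const.mul
      Complex.continuous_ofReal).sub continuous_const)).mul
      (continuous_const.mul (ee_cont _)))) 0 1))]
  refine Finset.sum_congr rfl fun p _ => ?_
  have : ∀ x : ℝ, (Complex.I * π * (2 * x - 1)) *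
      ((a p.1 * (starRingEnd ℂ) (b p.2)) * ee ((p.1 : ℤ) - p.2) x)
      = (a p.1 * (starRingEnd ℂ) (b p.2)) *
        ((Complex.I * π * (2 * x - 1)) * ee ((p.1 : ℤ) - p.2) x) := fun x => by ring
  simp_rw [this]
  rw [intervalIntegral.integral_const_mul, intK]
  by_cases h : p.1 = p.2
  · have : ((p.1 : ℤ) - (p.2 : ℤ)) = 0 := by rw [h]; ring
    simp [h, this]
  · have hne : ((p.1 : ℤ) - (p.2 : ℤ)) ≠ 0 := by
      simp only [sub_ne_zero]
      exact_mod_cast fun hh => h (PNat.coe_injective (by exact_mod_cast hh))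
    simp only [h, if_false, hne, if_false]
    rw [div_eq_mul_one_div]
    congr 1
    push_cast
    ring

lemma CS2 (F G : ℝ → ℂ) (hF : Continuous F) (hG : Continuous G) :
    ∫ x in (0:ℝ)..1, ‖F x‖ * ‖G x‖
      ≤ Real.sqrt (∫ x in (0:ℝ)..1, ‖F x‖ ^ 2) * Real.sqrt (∫ x in (0:ℝ)..1, ‖G x‖ ^ 2) := by
  have hμ : IsFiniteMeasure (volume.restrict (Set.Ioc (0:ℝ) 1)) :=
    ⟨by rw [Measure.restrict_apply_univ, Real.volume_Ioc]; simp⟩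
  have hpq : Real.HolderConjugate 2 2 := by constructor <;> norm_num
  have hm : ∀ F : ℝ → ℂ, Continuous F →
      MemLp F (ENNReal.ofReal 2) (volume.restrict (Set.Ioc (0:ℝ) 1)) := by
    intro F hF
    obtain ⟨C, hC⟩ := (isCompact_Icc (a := (0:ℝ)) (b := 1)).exists_bound_of_continuousOn
      hF.continuousOn
    exact MemLp.of_bound hF.aestronglyMeasurable C <|
      (ae_restrict_mem measurableSet_Ioc).mono fun x hx => hC x (Set.Ioc_subset_Icc_self hx)
  have key := integral_mul_norm_le_Lp_mul_Lq hpq (hm F hF) (hm G hG)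
  rw [intervalIntegral.integral_of_le zero_le_one, intervalIntegral.integral_of_le zero_le_one,
    intervalIntegral.integral_of_le zero_le_one]
  calc ∫ x in Set.Ioc (0:ℝ) 1, ‖F x‖ * ‖G x‖
      ≤ (∫ x in Set.Ioc (0:ℝ) 1, ‖F x‖ ^ (2:ℝ)) ^ (1/(2:ℝ))
        * (∫ x in Set.Ioc (0:ℝ) 1, ‖G x‖ ^ (2:ℝ)) ^ (1/(2:ℝ)) := key
    _ = _ := by
        rw [Real.sqrt_eq_rpow, Real.sqrt_eq_rpow]
        norm_num [Real.rpow_natCast]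

lemma finbound (a b : ℕ+ → ℂ) (s : Finset ℕ+) :
    ‖∑ p ∈ s ×ˢ s, (if p.1 = p.2 then 0 else a p.1 * (starRingEnd ℂ) (b p.2)
        / ((p.1 : ℂ) - (p.2 : ℂ)))‖
      ≤ π * Real.sqrt (∑ j ∈ s, ‖a j‖ ^ 2) * Real.sqrt (∑ j ∈ s, ‖b j‖ ^ 2) := by
  rw [identA]
  set f := fsum a s with hf
  set g := fsum b s with hg
  have hfc : Continuous f := fsum_cont a s
  have hgc : Continuous g := fsum_cont b s
  have step1 : ‖∫ x in (0:ℝ)..1, (Complex.I * π * (2 * x - 1)) * (f x * (starRingEnd ℂ) (g x))‖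
      ≤ ∫ x in (0:ℝ)..1, ‖(Complex.I * π * (2 * (x:ℂ) - 1)) * (f x * (starRingEnd ℂ) (g x))‖ :=
    intervalIntegral.norm_integral_le_integral_norm zero_le_one
  have step2 : ∫ x in (0:ℝ)..1, ‖(Complex.I * π * (2 * (x:ℂ) - 1)) * (f x * (starRingEnd ℂ) (g x))‖
      ≤ ∫ x in (0:ℝ)..1, π * (‖f x‖ * ‖g x‖) := by
    apply intervalIntegral.integral_mono_on zero_le_one
    · exact (Continuous.intervalIntegrable (by
        exact ((continuous_const.mul ((continuous_const.mul Complex.continuous_ofReal).sub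
          continuous_const)).mul (hfc.mul (Complex.continuous_conj.comp hgc))).norm) 0 1)
    · exact (Continuous.intervalIntegrable (by fun_prop) 0 1)
    · intro x hx
      have h1 : ‖(Complex.I * (π:ℂ) * (2 * (x:ℂ) - 1))‖ = π * |2 * x - 1| := by
        rw [show (2 * (x:ℂ) - 1) = ((2 * x - 1 : ℝ) : ℂ) by push_cast; ring]
        rw [norm_mul, norm_mul, Complex.norm_I, one_mul, Complex.norm_real, Complex.norm_real,
          Real.norm_eq_abs, Real.norm_eq_abs, _root_.abs_of_nonneg Real.pi_pos.le]
      have h2 : |2 * x - 1| ≤ 1 := by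
        rw [abs_le]; constructor <;> [linarith [hx.1]; linarith [hx.2]]
      rw [norm_mul, h1, norm_mul, RCLike.norm_conj]
      have := mul_le_mul_of_nonneg_right (mul_le_mul_of_nonneg_left h2 Real.pi_pos.le)
        (mul_nonneg (norm_nonneg (f x)) (norm_nonneg (g x)))
      simpa using this
  have step3 : ∫ x in (0:ℝ)..1, π * (‖f x‖ * ‖g x‖) = π * ∫ x in (0:ℝ)..1, ‖f x‖ * ‖g x‖ :=
    intervalIntegral.integral_const_mul _ _
  have step4 := CS2 f g hfc hgc
  have hb2 : (∫ x in (0:ℝ)..1, ‖f x‖ ^ 2) = ∑ j ∈ s, ‖a j‖ ^ 2 := identB a s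
  have hb3 : (∫ x in (0:ℝ)..1, ‖g x‖ ^ 2) = ∑ j ∈ s, ‖b j‖ ^ 2 := identB b s
  rw [hb2, hb3] at step4
  calc ‖∫ x in (0:ℝ)..1, (Complex.I * π * (2 * x - 1)) * (f x * (starRingEnd ℂ) (g x))‖
      ≤ ∫ x in (0:ℝ)..1, π * (‖f x‖ * ‖g x‖) := step1.trans step2
    _ = π * ∫ x in (0:ℝ)..1, ‖f x‖ * ‖g x‖ := step3
    _ ≤ π * (Real.sqrt (∑ j ∈ s, ‖a j‖ ^ 2) * Real.sqrt (∑ j ∈ s, ‖b j‖ ^ 2)) :=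
        mul_le_mul_of_nonneg_left step4 Real.pi_pos.le
    _ = _ := by ring

theorem stmt_12 (a b : ℕ+ → ℂ)
    (ha : Summable fun j => ‖a j‖ ^ 2) (hb : Summable fun j => ‖b j‖ ^ 2)
    (hsum : Summable fun p : ℕ+ × ℕ+ =>
      if p.1 = p.2 then 0 else a p.1 * (starRingEnd ℂ) (b p.2) / ((p.1 : ℂ) - (p.2 : ℂ))) :
    ‖∑' p : ℕ+ × ℕ+,
        if p.1 = p.2 then 0 else a p.1 * (starRingEnd ℂ) (b p.2) / ((p.1 : ℂ) - (p.2 : ℂ))‖ ^ 2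
      ≤ π ^ 2 * (∑' j, ‖a j‖ ^ 2) * (∑' j, ‖b j‖ ^ 2) := by
  set F : ℕ+ × ℕ+ → ℂ := fun p =>
    if p.1 = p.2 then 0 else a p.1 * (starRingEnd ℂ) (b p.2) / ((p.1 : ℂ) - (p.2 : ℂ)) with hF
  set S : ℂ := ∑' p, F p with hS
  set A : ℝ := ∑' j, ‖a j‖ ^ 2 with hA
  set B : ℝ := ∑' j, ‖b j‖ ^ 2 with hB
  have hA0 : 0 ≤ A := tsum_nonneg fun j => sq_nonneg _
  have hB0 : 0 ≤ B := tsum_nonneg fun j => sq_nonneg _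
  -- boxes
  set t : ℕ → Finset ℕ+ := fun N =>
    (Finset.range N).image (fun i => (⟨i + 1, Nat.succ_pos i⟩ : ℕ+)) with ht
  have hmono : Monotone t := fun M N h =>
    Finset.image_subset_image (Finset.range_subset_range.2 h)
  have hcov : ∀ j : ℕ+, ∃ N, j ∈ t N := by
    intro j
    refine ⟨(j : ℕ), Finset.mem_image.2 ⟨(j : ℕ) - 1, Finset.mem_range.2 ?_, ?_⟩⟩
    · exact Nat.sub_lt j.pos one_pos
    · apply PNat.coe_injective
      simpa using Nat.sub_add_cancel (show 1 ≤ (j:ℕ) from j.pos)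
  have hboxmono : Monotone fun N => (t N) ×ˢ (t N) := fun M N h =>
    Finset.product_subset_product (hmono h) (hmono h)
  have hboxcov : ∀ p : ℕ+ × ℕ+, ∃ N, p ∈ (t N) ×ˢ (t N) := by
    intro p
    obtain ⟨N1, h1⟩ := hcov p.1
    obtain ⟨N2, h2⟩ := hcov p.2
    exact ⟨max N1 N2, Finset.mem_product.2
      ⟨hmono (le_max_left N1 N2) h1, hmono (le_max_right N1 N2) h2⟩⟩
  have htend : Filter.Tendsto (fun N => (t N) ×ˢ (t N)) Filter.atTop Filter.atTop :=
    Filter.tendsto_atTop_finset_of_monotone hboxmono hboxcov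
  have htends : Filter.Tendsto (fun N => ∑ p ∈ (t N) ×ˢ (t N), F p) Filter.atTop (nhds S) :=
    (hsum.hasSum).comp htend
  have hbd : ∀ N, ‖∑ p ∈ (t N) ×ˢ (t N), F p‖ ≤ π * Real.sqrt A * Real.sqrt B := by
    intro N
    refine (finbound a b (t N)).trans ?_
    have h1 : ∑ j ∈ t N, ‖a j‖ ^ 2 ≤ A :=
      Summable.sum_le_tsum _ (fun j _ => sq_nonneg _) ha
    have h2 : ∑ j ∈ t N, ‖b j‖ ^ 2 ≤ B :=
      Summable.sum_le_tsum _ (fun j _ => sq_nonneg _) hb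
    have := mul_le_mul (mul_le_mul_of_nonneg_left (Real.sqrt_le_sqrt h1) Real.pi_pos.le)
      (Real.sqrt_le_sqrt h2) (Real.sqrt_nonneg _)
      (mul_nonneg Real.pi_pos.le (Real.sqrt_nonneg _))
    exact this
  have hnormS : ‖S‖ ≤ π * Real.sqrt A * Real.sqrt B :=
    le_of_tendsto htends.norm (Filter.Eventually.of_forall hbd)
  calc ‖S‖ ^ 2 ≤ (π * Real.sqrt A * Real.sqrt B) ^ 2 :=
        pow_le_pow_left₀ (norm_nonneg S) hnormS 2
    _ = π ^ 2 * A * B := by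
        rw [mul_pow, mul_pow, Real.sq_sqrt hA0, Real.sq_sqrt hB0]
end

section
/- Let (h_k) be a nondecreasing sequence of continuous functions on a compact metric space Ω with 0 ≤ h_k ≤ χ_ω pointwise, where ω ⊆ Ω is open, such that h_k → χ_ω pointwise on ω. Let Γ be a compact (in the uniform topology) set of continuous curves γ : [0,T] → Ω. Define g(a) = inf_{γ∈Γ} (1/T)∫₀^T a(γ(t)) dt for bounded measurable a. Then g(χ_ω) = lim_{k→∞} g(h_k) = sup_k g(h_k). -/
open MeasureTheory Filter

section Stmt19Aux

variable {Ω : Type*} [MetricSpace Ω] [CompactSpace Ω]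

lemma stmt19_integrable_comp (f : C(Ω, ℝ)) (γ : C(ℝ, Ω)) (T : ℝ) :
    IntervalIntegrable (fun t => f (γ t)) volume 0 T :=
  (f.continuous.comp γ.continuous).intervalIntegrable 0 T

lemma stmt19_integrable_ind (ω : Set Ω) (hω : IsOpen ω) (γ : C(ℝ, Ω)) (T : ℝ) :
    IntervalIntegrable (fun t => Set.indicator ω (fun _ => (1:ℝ)) (γ t)) volume 0 T := by
  have heq : (fun t => Set.indicator ω (fun _ => (1:ℝ)) (γ t))
      = Set.indicator (γ ⁻¹' ω) (fun _ => (1:ℝ)) := by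
    ext t; by_cases ht : γ t ∈ ω <;> simp [Set.indicator_apply, ht]
  rw [heq, intervalIntegrable_iff]
  exact (integrableOn_const measure_Ioc_lt_top.ne).indicator
    (hω.preimage γ.continuous).measurableSet

lemma stmt19_cont_integral (f : C(Ω, ℝ)) (T : ℝ) :
    Continuous fun γ : C(ℝ, Ω) => ∫ t in (0:ℝ)..T, f (γ t) := by
  rw [continuous_iff_continuousAt]
  intro γ₀
  rw [ContinuousAt, Metric.tendsto_nhds]
  intro ε hε
  have huc : UniformContinuous f := CompactSpace.uniformContinuous_of_continuous f.continuous
  have hε'pos : 0 < ε / 2 / (|T| + 1) := by positivity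
  obtain ⟨δ, hδ, hδ'⟩ := Metric.uniformContinuous_iff.mp huc _ hε'pos
  have huni : TendstoUniformlyOn (fun (γ : C(ℝ, Ω)) t => γ t) γ₀ (nhds γ₀) (Set.uIcc 0 T) :=
    ContinuousMap.tendsto_iff_forall_isCompact_tendstoUniformlyOn.mp tendsto_id _ isCompact_uIcc
  have hev := Metric.tendstoUniformlyOn_iff.mp huni δ hδ
  filter_upwards [hev] with γ hγ
  rw [Real.dist_eq,
    ← intervalIntegral.integral_sub (stmt19_integrable_comp f γ T) (stmt19_integrable_comp f γ₀ T)]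
  have hbound : ∀ t ∈ Set.uIoc (0:ℝ) T, ‖f (γ t) - f (γ₀ t)‖ ≤ ε / 2 / (|T| + 1) := by
    intro t ht
    have ht' : t ∈ Set.uIcc (0:ℝ) T := Set.uIoc_subset_uIcc ht
    have := hδ' (show dist (γ t) (γ₀ t) < δ by rw [dist_comm]; exact hγ t ht')
    rw [Real.norm_eq_abs, ← Real.dist_eq]
    exact this.le
  calc ‖∫ t in (0:ℝ)..T, (f (γ t) - f (γ₀ t))‖
      ≤ ε / 2 / (|T| + 1) * |T - 0| :=
        intervalIntegral.norm_integral_le_of_norm_le_const hbound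
    _ ≤ ε / 2 / (|T| + 1) * (|T| + 1) := by
        apply mul_le_mul_of_nonneg_left _ hε'pos.le
        rw [sub_zero]; linarith
    _ = ε / 2 := by field_simp
    _ < ε := by linarith

end Stmt19Aux

theorem stmt_19 {Ω : Type*} [MetricSpace Ω] [CompactSpace Ω]
    (ω : Set Ω) (hω : IsOpen ω)
    (T : ℝ) (hT : 0 < T)
    (h : ℕ → C(Ω, ℝ))
    (hmono : ∀ k, ∀ x, h k x ≤ h (k + 1) x)
    (hle : ∀ k, ∀ x, 0 ≤ h k x ∧ h k x ≤ Set.indicator ω (fun _ => (1:ℝ)) x)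
    (hconv : ∀ x ∈ ω, Tendsto (fun k => h k x) atTop (nhds 1))
    (Γ : Set C(ℝ, Ω)) (hne : Γ.Nonempty) (hcomp : IsCompact Γ)
    (g : (Ω → ℝ) → ℝ)
    (hg : ∀ a : Ω → ℝ, g a = sInf ((fun γ : C(ℝ, Ω) =>
      (1 / T) * ∫ t in (0:ℝ)..T, a (γ t)) '' Γ)) :
    (g (Set.indicator ω (fun _ => (1:ℝ))) = ⨆ k, g (h k)) ∧
      Tendsto (fun k => g (h k)) atTop (nhds (g (Set.indicator ω (fun _ => (1:ℝ))))) := by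
  classical
  set χ : Ω → ℝ := Set.indicator ω (fun _ => (1:ℝ)) with hχdef
  set F : C(ℝ, Ω) → ℝ := fun γ => (1 / T) * ∫ t in (0:ℝ)..T, χ (γ t) with hFdef
  set Fk : ℕ → C(ℝ, Ω) → ℝ := fun k γ => (1 / T) * ∫ t in (0:ℝ)..T, h k (γ t) with hFkdef
  have hTinv : (0:ℝ) < 1 / T := by positivity
  have hχ01 : ∀ x, 0 ≤ χ x ∧ χ x ≤ 1 := by
    intro x
    by_cases hx : x ∈ ω <;> simp [hχdef, Set.indicator_apply, hx]
  -- pointwise comparisons of the functionals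
  have hFk_le_F : ∀ k γ, Fk k γ ≤ F γ := by
    intro k γ
    apply mul_le_mul_of_nonneg_left _ hTinv.le
    exact intervalIntegral.integral_mono_on hT.le (stmt19_integrable_comp (h k) γ T)
      (stmt19_integrable_ind ω hω γ T) (fun t _ => (hle k (γ t)).2)
  have hFk_mono : ∀ γ, Monotone fun k => Fk k γ := by
    intro γ
    apply monotone_nat_of_le_succ
    intro k
    apply mul_le_mul_of_nonneg_left _ hTinv.le
    exact intervalIntegral.integral_mono_on hT.le (stmt19_integrable_comp (h k) γ T)
      (stmt19_integrable_comp (h (k+1)) γ T) (fun t _ => hmono k (γ t))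
  have hFk_nonneg : ∀ k γ, 0 ≤ Fk k γ := by
    intro k γ
    apply mul_nonneg hTinv.le
    exact intervalIntegral.integral_nonneg hT.le (fun t _ => (hle k (γ t)).1)
  have hF_nonneg : ∀ γ, 0 ≤ F γ := by
    intro γ
    apply mul_nonneg hTinv.le
    exact intervalIntegral.integral_nonneg hT.le (fun t _ => (hχ01 (γ t)).1)
  -- identification of g values
  have hgk : ∀ k, g (h k) = sInf (Fk k '' Γ) := fun k => hg (h k)
  have hgχ : g χ = sInf (F '' Γ) := hg χ
  -- boundedness below of images
  have hbdd : ∀ k, BddBelow (Fk k '' Γ) := by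
    intro k
    exact ⟨0, by rintro y ⟨γ, _, rfl⟩; exact hFk_nonneg k γ⟩
  have hbddF : BddBelow (F '' Γ) := ⟨0, by rintro y ⟨γ, _, rfl⟩; exact hF_nonneg γ⟩
  -- g (h k) ≤ g χ
  have hg_le : ∀ k, g (h k) ≤ g χ := by
    intro k
    rw [hgk, hgχ]
    refine le_csInf (hne.image F) ?_
    rintro y ⟨γ, hγ, rfl⟩
    exact (csInf_le (hbdd k) ⟨γ, hγ, rfl⟩).trans (hFk_le_F k γ)
  -- monotonicity of k ↦ g (h k)
  have hg_mono : Monotone fun k => g (h k) := by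
    apply monotone_nat_of_le_succ
    intro k
    rw [hgk, hgk]
    refine le_csInf (hne.image _) ?_
    rintro y ⟨γ, hγ, rfl⟩
    exact (csInf_le (hbdd k) ⟨γ, hγ, rfl⟩).trans (hFk_mono γ (Nat.le_succ k))
  have hbddAbove : BddAbove (Set.range fun k => g (h k)) :=
    ⟨g χ, by rintro y ⟨k, rfl⟩; exact hg_le k⟩
  set S : ℝ := ⨆ k, g (h k) with hSdef
  have hgk_le_S : ∀ k, g (h k) ≤ S := fun k => le_ciSup hbddAbove k
  -- continuity of the functionals Fk k
  have hFk_cont : ∀ k, Continuous (Fk k) := fun k =>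
    continuous_const.mul (stmt19_cont_integral (h k) T)
  -- minimizers
  have hminex : ∀ k, ∃ γ ∈ Γ, IsMinOn (Fk k) Γ γ := fun k =>
    hcomp.exists_isMinOn hne (hFk_cont k).continuousOn
  choose γc hγcΓ hγcmin using hminex
  have hgk_eq : ∀ k, g (h k) = Fk k (γc k) := by
    intro k
    rw [hgk]
    refine IsLeast.csInf_eq ⟨⟨γc k, hγcΓ k, rfl⟩, ?_⟩
    rintro y ⟨γ, hγ, rfl⟩
    exact hγcmin k hγ
  -- cluster point of the minimizing sequence
  set L : Filter C(ℝ, Ω) := Filter.map γc atTop with hLdef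
  have hLle : L ≤ Filter.principal Γ := by
    rw [hLdef, le_principal_iff, mem_map]
    exact Eventually.of_forall hγcΓ
  obtain ⟨γs, hγsΓ, hclust⟩ := hcomp.exists_clusterPt hLle
  -- every Fk j at γs is ≤ S
  have hFkS : ∀ j, Fk j γs ≤ S := by
    intro j
    by_contra hcon
    push_neg at hcon
    have hU : (Fk j) ⁻¹' (Set.Ioi S) ∈ nhds γs :=
      (hFk_cont j).continuousAt.preimage_mem_nhds (Ioi_mem_nhds hcon)
    have hfreq : ∃ᶠ γ in L, γ ∈ (Fk j) ⁻¹' (Set.Ioi S) :=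
      ((nhds γs).basis_sets.clusterPt_iff_frequently.mp hclust) _ hU
    rw [hLdef, frequently_map] at hfreq
    obtain ⟨k, hkj, hk⟩ := (hfreq.and_eventually (eventually_ge_atTop j)).exists
    have : Fk j (γc k) ≤ S :=
      le_trans (hFk_mono (γc k) hk) (show Fk k (γc k) ≤ S by rw [← hgk_eq k]; exact hgk_le_S k)
    exact absurd this (not_le.mpr hkj)
  -- F γs ≤ S via dominated convergence
  have htend : Tendsto (fun j => Fk j γs) atTop (nhds (F γs)) := by
    apply Tendsto.const_mul
    apply intervalIntegral.tendsto_integral_filter_of_dominated_convergence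
      (fun _ => (1:ℝ))
    · exact Eventually.of_forall fun j =>
        (((h j).continuous.comp γs.continuous).aestronglyMeasurable).restrict
    · refine Eventually.of_forall fun j => ae_of_all _ fun t _ => ?_
      rw [Real.norm_eq_abs, abs_of_nonneg (hle j (γs t)).1]
      exact le_trans (hle j (γs t)).2 (hχ01 (γs t)).2
    · exact intervalIntegrable_const
    · refine ae_of_all _ fun t _ => ?_
      by_cases hx : γs t ∈ ω
      · have : χ (γs t) = 1 := by simp [hχdef, Set.indicator_apply, hx]
        rw [this]
        exact hconv (γs t) hx
      · have h0 : χ (γs t) = 0 := by simp [hχdef, Set.indicator_apply, hx]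
        have hz : ∀ j, h j (γs t) = 0 := fun j =>
          le_antisymm (by rw [← h0]; exact (hle j (γs t)).2) (hle j (γs t)).1
        rw [h0]
        simpa [hz] using (tendsto_const_nhds : Tendsto (fun _ : ℕ => (0:ℝ)) atTop (nhds 0))
  have hFγs : F γs ≤ S := le_of_tendsto htend (Eventually.of_forall hFkS)
  have hgχ_le : g χ ≤ S := by
    rw [hgχ]
    exact le_trans (csInf_le hbddF ⟨γs, hγsΓ, rfl⟩) hFγs
  have hS_le : S ≤ g χ := ciSup_le hg_le
  have heq : g χ = S := le_antisymm hgχ_le hS_le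
  refine ⟨heq, ?_⟩
  rw [heq]
  exact tendsto_atTop_ciSup hg_mono hbddAbove
end
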